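/- Let A = (S, A) be a reaction system, S' ⊋ S, and A' = (S', A') any reaction system with A ⊆ A' ⊆ nonce_{S→S'}(A). Then for every Z ⊆ S', res_{A'}(Z) = res_A(Z ∩ S). -/

import Mathlib

/-- A reaction over background type `α`: (reactants, inhibitors, products). -/
abbrev Rxn (α : Type) := Finset α × Finset α × Finset α

variable {α : Type} [DecidableEq α]

/-- A reaction `r = (R, I, P)` is enabled in state `T` iff `R ⊆ T` and `I ∩ T = ∅`. -/
def enab (r : Rxn α) (T : Finset α) : Prop := r.1 ⊆ T ∧ Disjoint r.2.1 T

instance (r : Rxn α) (T : Finset α) : Decidable (enab r T) := by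
  unfold enab; infer_instance

/-- `res_r(T)`: the product set if `r` is enabled in `T`, else `∅`. -/
def resr (r : Rxn α) (T : Finset α) : Finset α := if enab r T then r.2.2 else ∅

/-- `res_A(T) = ⋃_{r ∈ A} res_r(T)`. -/
def resA (A : Finset (Rxn α)) (T : Finset α) : Finset α := A.biUnion (fun r => resr r T)

/-- State sequence of an interactive process starting in `X` with contexts `γ`:
`W₀ = X`, `W_{i+1} = C_{i+1} ∪ res_A(W_i)`. -/
def states (A : Finset (Rxn α)) (X : Finset α) (γ : ℕ → Finset α) : ℕ → Finset α
  | 0 => X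
  | n + 1 => γ (n + 1) ∪ resA A (states A X γ n)

/-- The nonce-extension of `A` from `S` to `S'`:
`{(R ∪ R', I ∪ I', P) | (R,I,P) ∈ A, R', I' ⊆ S' \ S, (R ∪ R') ∩ (I ∪ I') = ∅}`. -/
def nonce (A : Finset (Rxn α)) (S S' : Finset α) : Set (Rxn α) :=
  {r | ∃ a ∈ A, ∃ R' I' : Finset α, R' ⊆ S' \ S ∧ I' ⊆ S' \ S ∧
    Disjoint (a.1 ∪ R') (a.2.1 ∪ I') ∧ r = (a.1 ∪ R', a.2.1 ∪ I', a.2.2)}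

theorem enab_of_enab_union {a : Rxn α} {R' I' T : Finset α}
    (h : enab (a.1 ∪ R', a.2.1 ∪ I', a.2.2) T) : enab a T :=
  ⟨Finset.subset_union_left.trans h.1, h.2.mono_left Finset.subset_union_left⟩

theorem enab_inter_iff {a : Rxn α} {S : Finset α} (hR : a.1 ⊆ S) (hI : a.2.1 ⊆ S)
    (T : Finset α) : enab a (T ∩ S) ↔ enab a T := by
  refine ⟨fun ⟨hRT, hIT⟩ => ⟨hRT.trans Finset.inter_subset_left, ?_⟩,
    fun ⟨hRT, hIT⟩ => ⟨Finset.subset_inter hRT hR, hIT.mono_right Finset.inter_subset_left⟩⟩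
  exact Finset.disjoint_left.mpr fun y hya hyT =>
    Finset.disjoint_left.mp hIT hya (Finset.mem_inter.mpr ⟨hyT, hI hya⟩)

theorem mem_resA {A : Finset (Rxn α)} {T : Finset α} {x : α} :
    x ∈ resA A T ↔ ∃ r ∈ A, enab r T ∧ x ∈ r.2.2 := by
  simp only [resA, resr, Finset.mem_biUnion]
  refine exists_congr fun r => and_congr_right fun _ => ?_
  split_ifs with h <;> simp [h]

theorem resA_mono {A B : Finset (Rxn α)} (hAB : A ⊆ B) (T : Finset α) :
    resA A T ⊆ resA B T :=
  Finset.biUnion_subset_biUnion_of_subset_left _ hAB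

theorem resA_inter_eq {A : Finset (Rxn α)} {S : Finset α}
    (hA : ∀ r ∈ A, r.1 ⊆ S ∧ r.2.1 ⊆ S) (T : Finset α) :
    resA A (T ∩ S) = resA A T := by
  ext x
  simp only [mem_resA]
  refine exists_congr fun r => and_congr_right fun hr => ?_
  rw [enab_inter_iff (hA r hr).1 (hA r hr).2]

theorem resA_subset_of_subset_nonce {A A' : Finset (Rxn α)} {S S' : Finset α}
    (hA' : ↑A' ⊆ nonce A S S') (T : Finset α) : resA A' T ⊆ resA A T := by
  intro x hx
  obtain ⟨r, hr, hrT, hxr⟩ := mem_resA.mp hx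
  obtain ⟨a, ha, R', I', -, -, -, rfl⟩ := hA' hr
  exact mem_resA.mpr ⟨a, ha, enab_of_enab_union hrT, hxr⟩

theorem stmt15_general (S S' : Finset α) (A A' : Finset (Rxn α))
    (hA : ∀ r ∈ A, r.1 ⊆ S ∧ r.2.1 ⊆ S ∧ r.2.2 ⊆ S ∧ Disjoint r.1 r.2.1)
    (hAA' : A ⊆ A') (hA'n : ↑A' ⊆ nonce A S S')
    (Z : Finset α) :
    resA A' Z = resA A (Z ∩ S) := by
  rw [resA_inter_eq fun r hr => ⟨(hA r hr).1, (hA r hr).2.1⟩]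
  exact (resA_subset_of_subset_nonce hA'n Z).antisymm (resA_mono hAA' Z)

/-- for any reaction system `A' = (S', A')` with
`A ⊆ A' ⊆ nonce_{S→S'}(A)`, for every `Z ⊆ S'` one has `res_{A'}(Z) = res_A(Z ∩ S)`. -/
theorem stmt15 (S S' : Finset α) (hSS' : S ⊂ S') (A A' : Finset (Rxn α))
    (hA : ∀ r ∈ A, r.1 ⊆ S ∧ r.2.1 ⊆ S ∧ r.2.2 ⊆ S ∧ Disjoint r.1 r.2.1)
    (hAA' : A ⊆ A') (hA'n : ↑A' ⊆ nonce A S S')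
    (Z : Finset α) (hZ : Z ⊆ S') :
    resA A' Z = resA A (Z ∩ S) :=
  stmt15_general S S' A A' hA hAA' hA'n Z
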